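/- In LR-Subtraction Nim with any removable set S ⊆ ℤ≥2, if O_S(n) ∈ {R, N} then O_S(n-1), O_S(n+1) ∈ {L, N} (whenever n-1 ≥ 0). That is, whenever Right can win moving first from n, Left can win moving first from n+1 and n-1. -/
import Mathlib


open scoped Classical

inductive Outcome : Type
  | L | R | N | P
deriving DecidableEq

/-- Outcome determined from the set of outcomes of the options of a non-terminal position. -/
noncomputable def fromOptions (T : Set Outcome) : Outcome :=
  if Outcome.L ∈ T ∧ T ⊆ {Outcome.L, Outcome.N} then Outcome.L
  else if Outcome.R ∈ T ∧ T ⊆ {Outcome.R, Outcome.N} then Outcome.R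
  else if T = {Outcome.N} then Outcome.P
  else Outcome.N

/-- Outcome of Ending Partizan Subtraction Nim with removable set `S ⊆ ℤ≥2` and
terminal assignment `W`. -/
noncomputable def epOutcome (S : Set ℕ) (hS : ∀ s ∈ S, 2 ≤ s) (W : ℕ → Outcome) : ℕ → Outcome :=
  fun n => Nat.strongRecOn n (fun n ih =>
    if ∃ s ∈ S, s ≤ n then
      fromOptions {o | ∃ s, ∃ hs : s ∈ S, ∃ hsn : s ≤ n,
        o = ih (n - s) (by have := hS s hs; omega)}
    else W n)

/-- Outcome of `LR`-Subtraction Nim: at a terminal position, Left wins if the number of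
remaining tokens is even, Right wins if it is odd. -/
noncomputable def lrOutcome (S : Set ℕ) (hS : ∀ s ∈ S, 2 ≤ s) : ℕ → Outcome :=
  epOutcome S hS (fun n => if Even n then Outcome.L else Outcome.R)

lemma epOutcome_eq (S : Set ℕ) (hS : ∀ s ∈ S, 2 ≤ s) (W : ℕ → Outcome) (n : ℕ) :
    epOutcome S hS W n =
      if ∃ s ∈ S, s ≤ n then
        fromOptions {o | ∃ s, ∃ _ : s ∈ S, ∃ _ : s ≤ n, o = epOutcome S hS W (n - s)}
      else W n := by
  conv_lhs => rw [epOutcome, Nat.strongRecOn_eq]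
  rfl

lemma fromOptions_RN {T : Set Outcome} (hne : T.Nonempty)
    (h : fromOptions T = Outcome.R ∨ fromOptions T = Outcome.N) :
    ∃ o ∈ T, o = Outcome.R ∨ o = Outcome.P := by
  by_contra hc
  push_neg at hc
  have hsub : T ⊆ {Outcome.L, Outcome.N} := by
    intro o ho
    have := hc o ho
    cases o <;> simp_all
  unfold fromOptions at h
  by_cases hL : Outcome.L ∈ T
  · simp [hL, hsub] at h
  · have hTN : T = {Outcome.N} := by
      apply Set.eq_singleton_iff_nonempty_unique_mem.2 ⟨hne, ?_⟩
      intro o ho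
      have h1 := hsub ho
      rcases h1 with h1 | h1
      · exact absurd (h1 ▸ ho) hL
      · exact h1
    simp only [fromOptions, hTN] at h
    split_ifs at h <;> simp_all

lemma fromOptions_LN {T : Set Outcome}
    (h : ∃ o ∈ T, o = Outcome.L ∨ o = Outcome.P) :
    fromOptions T = Outcome.L ∨ fromOptions T = Outcome.N := by
  obtain ⟨o, ho, hoLP⟩ := h
  unfold fromOptions
  split_ifs with h1 h2 h3
  · left; rfl
  · exfalso; have := h2.2 ho; rcases hoLP with rfl | rfl <;> simp_all
  · exfalso; rw [h3] at ho; rcases hoLP with rfl | rfl <;> simp_all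
  · right; rfl

lemma Outcome.not_RN {o : Outcome} (h : ¬(o = Outcome.R ∨ o = Outcome.N)) :
    o = Outcome.L ∨ o = Outcome.P := by
  cases o <;> simp_all

theorem stmt2 (S : Set ℕ) (hS : ∀ s ∈ S, 2 ≤ s) (n : ℕ)
    (h : lrOutcome S hS n = Outcome.R ∨ lrOutcome S hS n = Outcome.N) :
    (1 ≤ n → (lrOutcome S hS (n - 1) = Outcome.L ∨ lrOutcome S hS (n - 1) = Outcome.N)) ∧
    (lrOutcome S hS (n + 1) = Outcome.L ∨ lrOutcome S hS (n + 1) = Outcome.N) := by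
  set O := lrOutcome S hS with hO
  have hrec : ∀ m, O m =
      if ∃ s ∈ S, s ≤ m then
        fromOptions {o | ∃ s, ∃ _ : s ∈ S, ∃ _ : s ≤ m, o = O (m - s)}
      else (if Even m then Outcome.L else Outcome.R) :=
    fun m => epOutcome_eq S hS _ m
  -- notation:
  -- r m : Right wins moving first; l m : Left wins moving first
  -- main claim by strong induction
  have main : ∀ n : ℕ, (O n = Outcome.R ∨ O n = Outcome.N) →
      (1 ≤ n → (O (n - 1) = Outcome.L ∨ O (n - 1) = Outcome.N)) ∧
      (O (n + 1) = Outcome.L ∨ O (n + 1) = Outcome.N) := by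
    intro n
    induction n using Nat.strong_induction_on with
    | _ n ih =>
    intro hr
    have hO0 : O 0 = Outcome.L := by
      rw [hrec 0]
      have h0 : ¬ ∃ s ∈ S, s ≤ 0 := by
        rintro ⟨s, hs, hs0⟩; have := hS s hs; omega
      rw [if_neg h0]
      simp
    by_cases hterm : ∃ s ∈ S, s ≤ n
    · -- non-terminal case
      rw [hrec n, if_pos hterm] at hr
      have hne : ({o | ∃ s, ∃ _ : s ∈ S, ∃ _ : s ≤ n, o = O (n - s)} : Set Outcome).Nonempty := by
        obtain ⟨s, hs, hsn⟩ := hterm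
        exact ⟨O (n - s), s, hs, hsn, rfl⟩
      obtain ⟨o, ⟨s, hs, hsn, rfl⟩, hoRP⟩ := fromOptions_RN hne hr
      -- O (n - s) ∈ {R, P}, i.e. Left moving first from n - s loses
      have hs2 := hS s hs
      have hnotl : ¬ (O (n - s) = Outcome.L ∨ O (n - s) = Outcome.N) := by
        rcases hoRP with h' | h' <;> rw [h'] <;> simp
      -- n - s ≠ 0 since O 0 = L
      have hns : 1 ≤ n - s := by
        rcases Nat.eq_zero_or_pos (n - s) with h' | h'
        · rw [h', hO0] at hnotl; simp at hnotl
        · exact h'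
      constructor
      · intro _
        -- l (n-1): move s from n-1 to n-s-1; Right first from n-s-1 loses
        have hrle : ¬ (O (n - s - 1) = Outcome.R ∨ O (n - s - 1) = Outcome.N) := by
          intro hc
          have := (ih (n - s - 1) (by omega) hc).2
          have : O (n - s - 1 + 1) = Outcome.L ∨ O (n - s - 1 + 1) = Outcome.N := this
          rw [show n - s - 1 + 1 = n - s by omega] at this
          exact hnotl this
        have hRP : O (n - s - 1) = Outcome.L ∨ O (n - s - 1) = Outcome.P :=
          Outcome.not_RN hrle
        have hterm' : ∃ t ∈ S, t ≤ n - 1 := ⟨s, hs, by omega⟩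
        rw [hrec (n - 1), if_pos hterm']
        apply fromOptions_LN
        exact ⟨O (n - 1 - s), ⟨s, hs, by omega, rfl⟩, by
          rw [show n - 1 - s = n - s - 1 by omega]; exact hRP⟩
      · -- l (n+1): move s from n+1 to n-s+1; Right first from n-s+1 loses
        have hrle : ¬ (O (n - s + 1) = Outcome.R ∨ O (n - s + 1) = Outcome.N) := by
          intro hc
          have := (ih (n - s + 1) (by omega) hc).1 (by omega)
          rw [show n - s + 1 - 1 = n - s by omega] at this
          exact hnotl this
        have hRP : O (n - s + 1) = Outcome.L ∨ O (n - s + 1) = Outcome.P :=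
          Outcome.not_RN hrle
        have hterm' : ∃ t ∈ S, t ≤ n + 1 := ⟨s, hs, by omega⟩
        rw [hrec (n + 1), if_pos hterm']
        apply fromOptions_LN
        exact ⟨O (n + 1 - s), ⟨s, hs, by omega, rfl⟩, by
          rw [show n + 1 - s = n - s + 1 by omega]; exact hRP⟩
    · -- terminal case: n is odd
      have hodd : ¬ Even n := by
        intro he
        rw [hrec n, if_neg hterm, if_pos he] at hr
        simp at hr
      constructor
      · intro hn1
        have hterm' : ¬ ∃ s ∈ S, s ≤ n - 1 := by
          rintro ⟨s, hs, h'⟩; exact hterm ⟨s, hs, by omega⟩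
        rw [hrec (n - 1), if_neg hterm']
        have : Even (n - 1) := by
          rcases Nat.even_or_odd n with he | ho
          · exact absurd he hodd
          · exact Nat.Odd.sub_odd ho odd_one
        simp [this]
      · by_cases hterm' : ∃ s ∈ S, s ≤ n + 1
        · -- the only move is s = n + 1, to 0
          rw [hrec (n + 1), if_pos hterm']
          obtain ⟨s, hs, hsn1⟩ := hterm'
          have hsn : s = n + 1 := by
            rcases Nat.lt_or_ge s (n + 1) with h' | h'
            · exact absurd ⟨s, hs, by omega⟩ hterm
            · omega
          apply fromOptions_LN
          refine ⟨O (n + 1 - s), ⟨s, hs, hsn1, rfl⟩, ?_⟩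
          rw [hsn, Nat.sub_self, hO0]; left; rfl
        · rw [hrec (n + 1), if_neg hterm']
          have : Even (n + 1) := by
            rcases Nat.even_or_odd n with he | ho
            · exact absurd he hodd
            · exact Odd.add_one ho
          simp [this]
  exact main n h
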